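/- arXiv:1909.05526 — 4 statements merged into one kernel-verified Lean document; each statement's English description precedes it below -/
import Mathlib

section
/- Let X and Y be vector spaces and let (f_i)_{i∈I} and (g_j)_{j∈J} be families of linear functionals on X and Y respectively. Then, inside the algebraic tensor product X ⊗ Y, one has ⋂_{i,j} ker(f_i ⊗ g_j) = (⋂_i ker f_i) ⊗ Y + X ⊗ (⋂_j ker g_j). -/
/-!
Put `A = ⋂ᵢ ker fᵢ` and `B = ⋂ⱼ ker gⱼ`. By right exactness of `⊗`, the kernel of
`X ⊗ Y → X/A ⊗ Y/B` is `A ⊗ Y + X ⊗ B`, and every `fᵢ ⊗ gⱼ` factors through this map as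
`f̄ᵢ ⊗ ḡⱼ`, where the families `f̄` and `ḡ` separate the points of `X/A` and `Y/B`. It remains to
see that the `f̄ᵢ ⊗ ḡⱼ` then separate the points of `X/A ⊗ Y/B`. Write `t = ∑ x_c ⊗ b_c` in a
basis `b` of the second factor: contracting with `f̄ᵢ` gives `∑ f̄ᵢ(x_c) b_c`, which is killed by
every `ḡⱼ` and hence vanishes, so `f̄ᵢ(x_c) = 0` for all `i` and `c`, i.e. every `x_c` is zero.
-/

open LinearMap TensorProduct

theorem Submodule.iInf_ker_liftQ_iInf_ker_eq_bot {R M N I : Type*} [Ring R] [AddCommGroup M]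
    [Module R M] [AddCommGroup N] [Module R N] (f : I → M →ₗ[R] N) :
    ⨅ i, ker ((⨅ i, ker (f i)).liftQ (f i) (iInf_le _ i)) = ⊥ := by
  refine (ker_pi _).symm.trans ?_
  rw [pi_liftQ_eq_liftQ_pi]
  exact ker_liftQ_eq_bot _ _ _ (ker_pi f).le

namespace TensorProduct

variable {R X Y : Type*} [CommSemiring R] [AddCommMonoid X] [Module R X] [AddCommMonoid Y]
  [Module R Y]

theorem lid_comp_map_eq_comp_lid_comp_rTensor (φ : X →ₗ[R] R) (ψ : Y →ₗ[R] R) :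
    (TensorProduct.lid R R).toLinearMap ∘ₗ map φ ψ =
      ψ ∘ₗ (TensorProduct.lid R Y).toLinearMap ∘ₗ rTensor Y φ := by
  ext x y
  simp

theorem lid_comp_map_eq_comp_rid_comp_lTensor (φ : X →ₗ[R] R) (ψ : Y →ₗ[R] R) :
    (TensorProduct.lid R R).toLinearMap ∘ₗ map φ ψ =
      φ ∘ₗ (TensorProduct.rid R X).toLinearMap ∘ₗ lTensor X ψ := by
  ext x y
  simp [mul_comm]

theorem iInf_ker_rid_comp_lTensor_coord_eq_bot {ι : Type*} (b : Module.Basis ι R Y) :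
    ⨅ c, ker ((TensorProduct.rid R X).toLinearMap ∘ₗ lTensor X (b.coord c)) = ⊥ := by
  classical
  rw [eq_bot_iff]
  intro t ht
  rw [Submodule.mem_iInf] at ht
  have h : finsuppScalarRight R R X ι (lTensor X b.repr.toLinearMap t) = 0 := by
    ext c
    rw [finsuppScalarRight_apply, ← lTensor_comp_apply]
    exact ht c
  rw [LinearEquiv.map_eq_zero_iff, ← LinearEquiv.coe_lTensor, LinearEquiv.coe_coe,
    LinearEquiv.map_eq_zero_iff] at h
  exact h

theorem iInf_ker_lid_comp_map_eq_bot [Module.Free R Y] {I J : Type*} {f : I → X →ₗ[R] R}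
    {g : J → Y →ₗ[R] R} (hf : ⨅ i, ker (f i) = ⊥) (hg : ⨅ j, ker (g j) = ⊥) :
    ⨅ (i : I) (j : J), ker ((TensorProduct.lid R R).toLinearMap ∘ₗ map (f i) (g j)) = ⊥ := by
  obtain ⟨ι, b⟩ := Module.Free.exists_basis (R := R) (M := Y)
  rw [eq_bot_iff]
  intro t ht
  simp only [Submodule.mem_iInf, mem_ker] at ht
  have hcontract (i : I) : TensorProduct.lid R Y (rTensor Y (f i) t) = 0 := by
    rw [← Submodule.mem_bot R, ← hg, Submodule.mem_iInf]
    intro j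
    simpa [lid_comp_map_eq_comp_lid_comp_rTensor] using ht i j
  have hcoord (c : ι) : TensorProduct.rid R X (lTensor X (b.coord c) t) = 0 := by
    rw [← Submodule.mem_bot R, ← hf, Submodule.mem_iInf]
    intro i
    have h := congr($(lid_comp_map_eq_comp_rid_comp_lTensor (f i) (b.coord c)) t)
    rw [lid_comp_map_eq_comp_lid_comp_rTensor] at h
    simpa [hcontract i] using h.symm
  rw [← iInf_ker_rid_comp_lTensor_coord_eq_bot (X := X) b, Submodule.mem_iInf]
  exact hcoord

end TensorProduct

/-- For families of linear functionals `(f i)` on `X` and `(g j)` on `Y`, the intersection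
of the kernels of the functionals `f i ⊗ g j` on `X ⊗ Y` equals
`(⋂ᵢ ker fᵢ) ⊗ Y + X ⊗ (⋂ⱼ ker gⱼ)`. -/
theorem iInf_ker_tensor_eq
    {k X Y : Type*} [Field k] [AddCommGroup X] [Module k X] [AddCommGroup Y] [Module k Y]
    {I J : Type*} (f : I → (X →ₗ[k] k)) (g : J → (Y →ₗ[k] k)) :
    (⨅ (i : I) (j : J), LinearMap.ker
        ((TensorProduct.lid k k).toLinearMap ∘ₗ TensorProduct.map (f i) (g j))) =
      LinearMap.range (LinearMap.rTensor Y (⨅ i, LinearMap.ker (f i)).subtype) ⊔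
        LinearMap.range (LinearMap.lTensor X (⨅ j, LinearMap.ker (g j)).subtype) := by
  set A := ⨅ i, ker (f i)
  set B := ⨅ j, ker (g j)
  have hfactor (i : I) (j : J) : map (f i) (g j) =
      map (A.liftQ (f i) (iInf_le _ i)) (B.liftQ (g j) (iInf_le _ j)) ∘ₗ map A.mkQ B.mkQ := by
    rw [← map_comp, Submodule.liftQ_mkQ, Submodule.liftQ_mkQ]
  have hker : ⨅ (i : I) (j : J), ker ((TensorProduct.lid k k).toLinearMap ∘ₗ map (f i) (g j)) =
      ker (map A.mkQ B.mkQ) := by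
    simp_rw [hfactor, ← comp_assoc, ker_comp (map A.mkQ B.mkQ), ← Submodule.comap_iInf]
    rw [iInf_ker_lid_comp_map_eq_bot (Submodule.iInf_ker_liftQ_iInf_ker_eq_bot f)
      (Submodule.iInf_ker_liftQ_iInf_ker_eq_bot g)]
    rfl
  rw [hker, TensorProduct.map_ker (exact_subtype_mkQ A) A.mkQ_surjective
    (exact_subtype_mkQ B) B.mkQ_surjective, sup_comm]
end

section
/- Let A be the symmetric algebra of a finite-dimensional vector space B over ℝ, and let Φ ⊆ B* be a linear subspace of the dual of B. For f ∈ B*, let f_* denote the unique algebra character of A extending f. Then the ideal of A generated by ⋂_{φ∈Φ} ker φ (as a subspace of B) equals ⋂_{φ∈Φ} ker φ_*. -/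
open MvPolynomial

/-- The canonical linear embedding of the finite-dimensional vector space `Fin n → ℝ`
into its symmetric algebra, realised as the polynomial algebra `MvPolynomial (Fin n) ℝ`. -/
noncomputable def symIota (n : ℕ) (b : Fin n → ℝ) : MvPolynomial (Fin n) ℝ :=
  ∑ i, b i • (X i : MvPolynomial (Fin n) ℝ)

/-- The unique algebra character of the symmetric algebra `Sym(B) = MvPolynomial (Fin n) ℝ`
extending a linear functional `φ` on `B = Fin n → ℝ` (namely evaluation at the point
`(φ eᵢ)ᵢ`). -/
noncomputable def charExt {n : ℕ} (φ : Module.Dual ℝ (Fin n → ℝ)) :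
    MvPolynomial (Fin n) ℝ →ₐ[ℝ] ℝ :=
  MvPolynomial.aeval (fun i => φ (Pi.single i 1))

/-!
Via `φ ↦ (φ eᵢ)ᵢ` the characters `φ_*`, `φ ∈ Φ`, are the evaluations at the points of a linear
subspace, and `K = ⋂_{φ ∈ Φ} ker φ` consists of the linear forms vanishing on it. In coordinates
given by a basis of `B` extending a basis of `K`, finite-dimensional duality (`Φ = K^⊥`) makes these
points exactly those whose `K`-coordinates vanish, and over an infinite field a polynomial vanishing
on a coordinate subspace lies in the ideal generated by the vanishing coordinates.
-/

namespace MvPolynomial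

theorem mem_ideal_span_X_image_of_eval_eq_zero {R σ : Type*} [CommRing R] [IsDomain R]
    [Infinite R] {s : Set σ} {p : MvPolynomial σ R}
    (hp : ∀ x : σ → R, (∀ i ∈ s, x i = 0) → eval x p = 0) :
    p ∈ Ideal.span (X '' s : Set (MvPolynomial σ R)) := by
  classical
  set I := Ideal.span (X '' s : Set (MvPolynomial σ R))
  set kill : MvPolynomial σ R →ₐ[R] MvPolynomial σ R := aeval fun i => if i ∈ s then 0 else X i
    with hkill
  have hkill_p : kill p = 0 := funext fun x => by
    have := hp (fun i => if i ∈ s then 0 else x i) fun i hi => if_pos hi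
    change aeval x (kill p) = 0
    rw [hkill, comp_aeval_apply]
    simp only [apply_ite, map_zero, aeval_X]
    exact this
  have hkill_mod_I : (Ideal.Quotient.mkₐ R I).comp kill = Ideal.Quotient.mkₐ R I := by
    refine algHom_ext fun i => ?_
    by_cases hi : i ∈ s
    · simpa [kill, hi] using
        (Ideal.Quotient.eq_zero_iff_mem.mpr (Ideal.subset_span (Set.mem_image_of_mem X hi))).symm
    · simp [kill, hi]
  have := congrArg (· p) hkill_mod_I
  simp only [AlgHom.comp_apply, hkill_p, map_zero, Ideal.Quotient.mkₐ_eq_mk] at this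
  exact Ideal.Quotient.eq_zero_iff_mem.mp this.symm

end MvPolynomial

open Module

theorem symIota_eq_linearCombination (n : ℕ) :
    symIota n = Fintype.linearCombination ℝ (X : Fin n → MvPolynomial (Fin n) ℝ) :=
  rfl

theorem charExt_symIota {n : ℕ} (φ : Dual ℝ (Fin n → ℝ)) (b : Fin n → ℝ) :
    charExt φ (symIota n b) = φ b := by
  rw [symIota_eq_linearCombination]
  show ((charExt φ).toLinearMap ∘ₗ Fintype.linearCombination ℝ X) b = φ b
  congr 1
  ext i
  simp [charExt]

theorem charExt_aeval_symIota {n : ℕ} {ι : Type*} (φ : Dual ℝ (Fin n → ℝ))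
    (u : ι → Fin n → ℝ) (q : MvPolynomial ι ℝ) :
    charExt φ (aeval (R := ℝ) (symIota n ∘ u) q) = eval (φ ∘ u) q := by
  rw [comp_aeval_apply, ← coe_aeval_eq_eval]
  simp [charExt_symIota, Function.comp_def]

theorem aeval_symIota_comp_basis_surjective {n : ℕ} {ι : Type*} (u : Basis ι ℝ (Fin n → ℝ)) :
    Function.Surjective (aeval (R := ℝ) (symIota n ∘ u)) := by
  rw [← AlgHom.range_eq_top, aeval_range, eq_top_iff, ← adjoin_range_X (R := ℝ) (σ := Fin n),
    Algebra.adjoin_le_iff]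
  rintro _ ⟨j, rfl⟩
  apply Algebra.span_le_adjoin ℝ
  have : X j = symIota n (Pi.single j 1) := by simp [symIota_eq_linearCombination]
  rw [this, Set.range_comp, symIota_eq_linearCombination, Submodule.span_image, u.span_eq]
  exact Submodule.mem_map_of_mem Submodule.mem_top

theorem mem_ideal_span_symIota_of_charExt_eq_zero {n : ℕ} {ι : Type*}
    (u : Basis ι ℝ (Fin n → ℝ)) (s : Set ι) {p : MvPolynomial (Fin n) ℝ}
    (hp : ∀ φ : Dual ℝ (Fin n → ℝ), (∀ i ∈ s, φ (u i) = 0) → charExt φ p = 0) :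
    p ∈ Ideal.span (symIota n '' (u '' s)) := by
  obtain ⟨q, rfl⟩ := aeval_symIota_comp_basis_surjective u p
  have hq : q ∈ Ideal.span (X '' s) := mem_ideal_span_X_image_of_eval_eq_zero fun y hy => by
    have hφ : ⇑(u.constr ℝ y) ∘ u = y := funext (u.constr_basis ℝ y)
    have := hp (u.constr ℝ y) fun i hi => by rw [u.constr_basis, hy i hi]
    rwa [charExt_aeval_symIota, hφ] at this
  simpa [Ideal.map_span, Set.image_image] using
    Ideal.mem_map_of_mem (aeval (R := ℝ) (symIota n ∘ u)) hq

theorem mem_ideal_span_symIota_of_forall_charExt_eq_zero {n : ℕ}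
    (Φ : Submodule ℝ (Dual ℝ (Fin n → ℝ))) {p : MvPolynomial (Fin n) ℝ}
    (hp : ∀ φ ∈ Φ, charExt φ p = 0) :
    p ∈ Ideal.span (symIota n '' {b : Fin n → ℝ | ∀ φ ∈ Φ, φ b = 0}) := by
  obtain ⟨s, hs_ker, hs_span, hs_indep : LinearIndepOn ℝ id s⟩ :=
    exists_linearIndependent ℝ (Φ.dualCoannihilator : Set (Fin n → ℝ))
  have hu : Basis.extend hs_indep '' ((↑) ⁻¹' s) = s := by
    rw [Basis.coe_extend, Set.image_preimage_eq_of_subset]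
    simpa using LinearIndepOn.subset_extend hs_indep _
  refine Ideal.span_mono (Set.image_mono ?_) (mem_ideal_span_symIota_of_charExt_eq_zero
    (Basis.extend hs_indep) ((↑) ⁻¹' s) fun φ hφ => hp φ ?_)
  · rw [hu]
    exact fun b hb => (Submodule.mem_dualCoannihilator b).mp (hs_ker hb)
  · have hs_le_ker : s ⊆ LinearMap.ker φ := by
      rw [← hu]
      rintro _ ⟨i, hi, rfl⟩
      exact hφ i hi
    have hK_le_ker := Submodule.span_le.mpr hs_le_ker
    rw [hs_span, Submodule.span_eq] at hK_le_ker
    rw [← Subspace.dualCoannihilator_dualAnnihilator_eq (W := Φ), Submodule.mem_dualAnnihilator]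
    exact fun w hw => hK_le_ker hw

/-- For a linear subspace `Φ` of the dual of the finite-dimensional space `B = Fin n → ℝ`,
the ideal of the symmetric algebra of `B` generated by `⋂_{φ ∈ Φ} ker φ ⊆ B` equals the
intersection of the kernels of the characters extending the elements of `Φ`. -/
theorem ideal_span_inter_ker_eq_iInf_ker_charExt (n : ℕ)
    (Φ : Submodule ℝ (Module.Dual ℝ (Fin n → ℝ))) :
    Ideal.span (symIota n '' {b : Fin n → ℝ | ∀ φ ∈ Φ, φ b = 0}) =
      ⨅ φ ∈ Φ, RingHom.ker (charExt φ) := by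
  refine le_antisymm ?_ fun p hp => ?_
  · rw [Ideal.span_le]
    rintro _ ⟨b, hb, rfl⟩
    simpa only [SetLike.mem_coe, Submodule.mem_iInf, RingHom.mem_ker, charExt_symIota,
      Set.mem_ofPred_eq] using hb
  · simp only [Submodule.mem_iInf, RingHom.mem_ker] at hp
    exact mem_ideal_span_symIota_of_forall_charExt_eq_zero Φ hp
end

section
/- Let r ≥ 2, let θ > 0, and let N_1 ≥ N_2 ≥ … ≥ N_r ≥ 1 be integers. Then Σ_{n_1=0}^{N_1−1} ⋯ Σ_{n_r=0}^{N_r−1} 2^{−θ (max_i n_i − min_i n_i)} ≤ C(θ, r) · N_2 N_3 ⋯ N_r, where C(θ, r) is a constant depending only on θ and r (and not on the N_i). -/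
/-!
Let `q = 2^{-θ} < 1`. The spread `maxᵢ nᵢ - minᵢ nᵢ` is at least `|n₁ - n₂|`, so each summand is at
most `q^{|n₁ - n₂|}`. For fixed `n₂, …, n_r`, the sum over `n₁` of `q^{|n₁ - n₂|}` is bounded by twice
a geometric series, uniformly in `N₁`; the remaining coordinates contribute `N₂ ⋯ N_r`.
-/

open Finset

lemma Fintype.sum_pi_le_prod_card_nsmul {ι M : Type*} [DecidableEq ι] [Fintype ι]
    [AddCommMonoid M] [PartialOrder M] [IsOrderedAddMonoid M]
    {β : ι → Type*} [∀ i, Fintype (β i)] (i : ι) {f : (∀ j, β j) → M} {C : M}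
    (h : ∀ m : ∀ j : {j // j ≠ i}, β j, ∑ b, f ((Equiv.piSplitAt i β).symm (b, m)) ≤ C) :
    ∑ x, f x ≤ (∏ j ∈ univ.erase i, Fintype.card (β j)) • C := by
  rw [← (Equiv.piSplitAt i β).symm.sum_comp, Fintype.sum_prod_type_right]
  calc ∑ m, ∑ b, f ((Equiv.piSplitAt i β).symm (b, m)) ≤ ∑ _m : ∀ j : {j // j ≠ i}, β j, C :=
        sum_le_sum fun m _ => h m
    _ = (∏ j ∈ univ.erase i, Fintype.card (β j)) • C := by
        rw [sum_const, card_univ, Fintype.card_pi,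
          prod_subtype (p := (· ≠ i)) _ (fun j => by simp) (fun j => Fintype.card (β j))]

lemma sum_pow_le_inv_one_sub_of_injOn {α : Type*} [DecidableEq α] {q : ℝ} (hq0 : 0 ≤ q)
    (hq1 : q < 1) {s : Finset α} {e : α → ℕ} (he : Set.InjOn e s) :
    ∑ a ∈ s, q ^ e a ≤ (1 - q)⁻¹ := by
  rw [← sum_image he, ← tsum_geometric_of_lt_one hq0 hq1]
  exact (summable_geometric_of_lt_one hq0 hq1).sum_le_tsum _ fun k _ => pow_nonneg hq0 k

lemma sum_pow_dist_le {q : ℝ} (hq0 : 0 ≤ q) (hq1 : q < 1) (s : Finset ℕ) (b : ℕ) :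
    ∑ a ∈ s, q ^ Nat.dist a b ≤ 2 * (1 - q)⁻¹ := by
  rw [← sum_filter_add_sum_filter_not s (· ≤ b), two_mul]
  refine add_le_add (sum_pow_le_inv_one_sub_of_injOn hq0 hq1 ?_)
    (sum_pow_le_inv_one_sub_of_injOn hq0 hq1 ?_) <;>
  · intro x hx y hy hxy
    simp only [coe_filter, Set.mem_ofPred_eq] at hx hy
    simp only [Nat.dist] at hxy
    omega

lemma Nat.dist_le_iSup_sub_iInf {ι : Type*} [Finite ι] (n : ι → ℕ) (i j : ι) :
    Nat.dist (n i) (n j) ≤ (⨆ k, n k) - ⨅ k, n k := by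
  have hsup : ∀ k, n k ≤ ⨆ k, n k := le_ciSup (Set.finite_range n).bddAbove
  have hinf : ∀ k, ⨅ k, n k ≤ n k := ciInf_le (OrderBot.bddBelow (Set.range n))
  have := hsup i; have := hsup j; have := hinf i; have := hinf j
  unfold Nat.dist
  omega

/-- For `r ≥ 2`, `θ > 0` and integers `N₁ ≥ N₂ ≥ … ≥ N_r ≥ 1`, the sum
`Σ_{n₁ < N₁} ⋯ Σ_{n_r < N_r} 2^{−θ(maxᵢ nᵢ − minᵢ nᵢ)}` is bounded by
`C(θ, r) · N₂ ⋯ N_r`, with a constant depending only on `θ` and `r`. -/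
theorem sum_two_rpow_max_sub_min_le (θ : ℝ) (hθ : 0 < θ) (r : ℕ) (hr : 2 ≤ r) :
    ∃ C : ℝ, ∀ N : Fin r → ℕ, (∀ i, 1 ≤ N i) → Antitone N →
      ∑ n : ((i : Fin r) → Fin (N i)),
          (2 : ℝ) ^ (-θ * ((((⨆ i, (n i : ℕ)) - (⨅ i, (n i : ℕ)) : ℕ)) : ℝ)) ≤
        C * ∏ i ∈ Finset.univ.erase (⟨0, by omega⟩ : Fin r), (N i : ℝ) := by
  set q : ℝ := 2 ^ (-θ)
  have hq0 : 0 ≤ q := by positivity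
  have hq1 : q < 1 := Real.rpow_lt_one_of_one_lt_of_neg one_lt_two (neg_neg_of_pos hθ)
  refine ⟨2 * (1 - q)⁻¹, fun N _ _ => ?_⟩
  set i₀ : Fin r := ⟨0, by omega⟩
  set i₁ : Fin r := ⟨1, by omega⟩
  have hi₁ : i₁ ≠ i₀ := by simp [i₀, i₁, Fin.ext_iff]
  have hpoint (n : (i : Fin r) → Fin (N i)) :
      (2 : ℝ) ^ (-θ * ((((⨆ i, (n i : ℕ)) - (⨅ i, (n i : ℕ)) : ℕ)) : ℝ)) ≤
        q ^ Nat.dist (n i₀) (n i₁) := by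
    rw [Real.rpow_mul zero_le_two, Real.rpow_natCast]
    exact pow_le_pow_of_le_one hq0 hq1.le (Nat.dist_le_iSup_sub_iInf (fun i => (n i : ℕ)) i₀ i₁)
  calc _ ≤ ∑ n : ((i : Fin r) → Fin (N i)), q ^ Nat.dist (n i₀) (n i₁) :=
        sum_le_sum fun n _ => hpoint n
    _ ≤ (∏ i ∈ univ.erase i₀, Fintype.card (Fin (N i))) • (2 * (1 - q)⁻¹) := by
        refine Fintype.sum_pi_le_prod_card_nsmul i₀ fun m => ?_
        simp only [Equiv.piSplitAt_symm_apply, dite_true, dif_neg hi₁]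
        rw [Fin.sum_univ_eq_sum_range (fun a => q ^ Nat.dist a (m ⟨i₁, hi₁⟩))]
        exact sum_pow_dist_le hq0 hq1 (range (N i₀)) (m ⟨i₁, hi₁⟩)
    _ = _ := by simp [nsmul_eq_mul, mul_comm]
end

section
/- Let P be a Markov kernel on a measurable space X (with measurable one-step transition probabilities P(x, ·)), let K be a measurable set, B a measurable set, and ρ, constants such that: (i) P(x, K) ≥ 1/2 for all x ∈ X; (ii) P(v, B) ≥ ρ for all v ∈ K; (iii) ‖P(v, ·) − P(w, ·)‖_TV ≤ 1/2 for all v, w ∈ B. Then for the three-step kernel P³ one has ‖P³(v, ·) − P³(w, ·)‖_TV ≤ 1 − ρ/4 for all v, w ∈ X. -/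
/-!
Write `μ = P²(v)`, `ν = P²(w)` and `f = P(·, A)`. Conditions (i) and (ii) give `μ(B), ν(B) ≥ ρ/2`,
and (iii) says that `f` oscillates by at most `1/2` on `B`, so `m ≤ f ≤ M` on `B` for some
`0 ≤ m ≤ M ≤ min (m + 1/2) 1`. Then `P³(v, A) = ∫ f dμ ≤ 1 - (1 - M) μ(B)` and
`P³(w, A) = ∫ f dν ≥ m ν(B)`, whose difference is at most `1 - (ρ/2) (1 - (M - m)) ≤ 1 - ρ/4`.
-/

open MeasureTheory ProbabilityTheory
open scoped ENNReal

/-- The total variation distance between two measures, normalised so that mutually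
singular probability measures have distance `1`. -/
noncomputable def tvDist {X : Type*} [MeasurableSpace X] (μ ν : Measure X) : ℝ :=
  ⨆ A : {A : Set X // MeasurableSet A}, |(μ A).toReal - (ν A).toReal|

open Set

section TotalVariation

variable {X : Type*} [MeasurableSpace X]

theorem tvDist_le_of_forall_sub_le {μ ν : Measure X} {c : ℝ}
    (hμν : ∀ A, MeasurableSet A → (μ A).toReal - (ν A).toReal ≤ c)
    (hνμ : ∀ A, MeasurableSet A → (ν A).toReal - (μ A).toReal ≤ c) : tvDist μ ν ≤ c := by
  have : Nonempty {A : Set X // MeasurableSet A} := ⟨⟨∅, MeasurableSet.empty⟩⟩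
  exact ciSup_le fun ⟨A, hA⟩ => abs_sub_le_iff.2 ⟨hμν A hA, hνμ A hA⟩

theorem abs_sub_le_tvDist (μ ν : Measure X) [IsProbabilityMeasure μ] [IsProbabilityMeasure ν]
    {A : Set X} (hA : MeasurableSet A) : |(μ A).toReal - (ν A).toReal| ≤ tvDist μ ν := by
  have hbound : ∀ A : Set X, |(μ A).toReal - (ν A).toReal| ≤ 1 := fun A =>
    abs_sub_le_of_nonneg_of_le measureReal_nonneg measureReal_le_one
      measureReal_nonneg measureReal_le_one
  exact le_ciSup (f := fun A : {A : Set X // MeasurableSet A} => |(μ A).toReal - (ν A).toReal|)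
    ⟨1, by rintro _ ⟨A, rfl⟩; exact hbound A⟩ ⟨A, hA⟩

end TotalVariation

section Integral

variable {X : Type*} [MeasurableSpace X] {μ ν : Measure X} [IsProbabilityMeasure μ]
  [IsFiniteMeasure ν] {f : X → ℝ} {B : Set X} {a : ℝ}

theorem integral_sub_integral_le_of_mem_Icc (hfμ : Integrable f μ) (hfν : Integrable f ν)
    (hf : ∀ x, f x ∈ Icc 0 1) (hB : MeasurableSet B) {m M : ℝ} (hm : 0 ≤ m) (hM : M ≤ 1)
    (hfB : ∀ x ∈ B, f x ∈ Icc m M) (hμB : a ≤ μ.real B) (hνB : a ≤ ν.real B) :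
    ∫ x, f x ∂μ - ∫ x, f x ∂ν ≤ 1 - a * (1 - (M - m)) := by
  have hμ : (1 - M) * μ.real B ≤ 1 - ∫ x, f x ∂μ := by
    have hint : Integrable (fun x => 1 - f x) μ := (integrable_const 1).sub hfμ
    calc (1 - M) * μ.real B
        ≤ ∫ x in B, (1 - f x) ∂μ := setIntegral_ge_of_const_le_real hB (measure_ne_top μ B)
          (fun x hx => sub_le_sub_left (hfB x hx).2 1) hint.integrableOn
      _ ≤ ∫ x, (1 - f x) ∂μ :=
          setIntegral_le_integral hint (ae_of_all _ fun x => sub_nonneg.2 (hf x).2)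
      _ = 1 - ∫ x, f x ∂μ := by
          rw [integral_sub (integrable_const 1) hfμ, integral_const, probReal_univ, one_smul]
  have hν : m * ν.real B ≤ ∫ x, f x ∂ν :=
    (setIntegral_ge_of_const_le_real hB (measure_ne_top ν B) (fun x hx => (hfB x hx).1)
      hfν.integrableOn).trans (setIntegral_le_integral hfν (ae_of_all _ fun x => (hf x).1))
  nlinarith [mul_le_mul_of_nonneg_left hμB (sub_nonneg.2 hM), mul_le_mul_of_nonneg_left hνB hm]

theorem integral_sub_integral_le_of_forall_sub_le (hfμ : Integrable f μ) (hfν : Integrable f ν)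
    (hf : ∀ x, f x ∈ Icc 0 1) (hB : MeasurableSet B) {δ : ℝ}
    (hosc : ∀ x ∈ B, ∀ y ∈ B, f x - f y ≤ δ) (ha : 0 ≤ a) (hμB : a ≤ μ.real B)
    (hνB : a ≤ ν.real B) : ∫ x, f x ∂μ - ∫ x, f x ∂ν ≤ 1 - a * (1 - δ) := by
  -- `sInf ∅ = 0` in `ℝ`, so the case `B = ∅` needs no separate treatment.
  set m := sInf (f '' B)
  have hm : 0 ≤ m := Real.sInf_nonneg (by rintro _ ⟨x, -, rfl⟩; exact (hf x).1)
  have hbdd : BddBelow (f '' B) := ⟨0, by rintro _ ⟨x, -, rfl⟩; exact (hf x).1⟩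
  have hfB : ∀ x ∈ B, f x ∈ Icc m (min (m + δ) 1) := by
    intro x hx
    have hlow : f x - δ ≤ m :=
      le_csInf ⟨f x, x, hx, rfl⟩ (by rintro _ ⟨y, hy, rfl⟩; linarith [hosc x hx y hy])
    exact ⟨csInf_le hbdd ⟨x, hx, rfl⟩, le_min (by linarith) (hf x).2⟩
  calc ∫ x, f x ∂μ - ∫ x, f x ∂ν ≤ 1 - a * (1 - (min (m + δ) 1 - m)) :=
        integral_sub_integral_le_of_mem_Icc hfμ hfν hf hB hm (min_le_right _ _) hfB hμB hνB
    _ ≤ 1 - a * (1 - δ) := by nlinarith [min_le_left (m + δ) 1]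

end Integral

namespace ProbabilityTheory.Kernel

variable {X Y Z : Type*} [MeasurableSpace X] [MeasurableSpace Y] [MeasurableSpace Z]
  {κ : Kernel X Y} {η : Kernel Y Z}

theorem mul_le_comp_apply {K : Set Y} {B : Set Z} (hB : MeasurableSet B) {c d : ℝ≥0∞} {x : X}
    (hκ : c ≤ κ x K) (hη : ∀ y ∈ K, d ≤ η y B) : d * c ≤ (η ∘ₖ κ) x B := by
  rw [comp_apply' _ _ _ hB]
  calc d * c ≤ d * κ x K := by gcongr
    _ = ∫⁻ _ in K, d ∂κ x := (MeasureTheory.setLIntegral_const K d).symm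
    _ ≤ ∫⁻ y in K, η y B ∂κ x := setLIntegral_mono (η.measurable_coe hB) hη
    _ ≤ ∫⁻ y, η y B ∂κ x := setLIntegral_le_lintegral K _

theorem measureReal_comp_apply [IsFiniteKernel η] {A : Set Z} (hA : MeasurableSet A) (x : X) :
    ((η ∘ₖ κ) x).real A = ∫ y, (η y).real A ∂κ x := by
  rw [measureReal_def, comp_apply' _ _ _ hA, ← integral_toReal (η.measurable_coe hA).aemeasurable
    (ae_of_all _ fun y => measure_lt_top (η y) A)]
  rfl

theorem integrable_measureReal [IsFiniteKernel η] (μ : Measure Y) [IsFiniteMeasure μ]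
    {A : Set Z} (hA : MeasurableSet A) : Integrable (fun y => (η y).real A) μ :=
  Integrable.of_bound (η.measurable_coe hA).ennreal_toReal.aestronglyMeasurable η.bound.toReal
    (ae_of_all _ fun y => by
      rw [Real.norm_of_nonneg measureReal_nonneg]
      exact ENNReal.toReal_mono (bound_ne_top η) (measure_le_bound η y A))

end ProbabilityTheory.Kernel

theorem doeblin_three_step_general {X : Type*} [MeasurableSpace X]
    (P : Kernel X X) [IsMarkovKernel P]
    (K B : Set X) (hB : MeasurableSet B) (ρ : ℝ)
    (h1 : ∀ x : X, (1 / 2 : ℝ≥0∞) ≤ P x K)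
    (h2 : ∀ v ∈ K, ENNReal.ofReal ρ ≤ P v B)
    (h3 : ∀ v ∈ B, ∀ w ∈ B, tvDist (P v) (P w) ≤ 1 / 2) :
    ∀ v w : X, tvDist ((P ∘ₖ P ∘ₖ P) v) ((P ∘ₖ P ∘ₖ P) w) ≤ 1 - ρ / 4 := by
  have hreturn : ∀ u, max ρ 0 / 2 ≤ ((P ∘ₖ P) u).real B := fun u => by
    have := ENNReal.toReal_mono (measure_ne_top _ _) (Kernel.mul_le_comp_apply hB (h1 u) h2)
    rwa [ENNReal.toReal_mul, ENNReal.toReal_ofReal', one_div, ENNReal.toReal_inv,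
      ENNReal.toReal_ofNat, ← div_eq_mul_inv] at this
  have hosc : ∀ A, MeasurableSet A → ∀ x ∈ B, ∀ y ∈ B, (P x).real A - (P y).real A ≤ 1 / 2 :=
    fun A hA x hx y hy => (le_abs_self _).trans ((abs_sub_le_tvDist _ _ hA).trans (h3 x hx y hy))
  have hstep : ∀ u u' A, MeasurableSet A →
      ((P ∘ₖ P ∘ₖ P) u).real A - ((P ∘ₖ P ∘ₖ P) u').real A ≤ 1 - ρ / 4 := by
    intro u u' A hA
    rw [Kernel.comp_assoc, Kernel.measureReal_comp_apply hA, Kernel.measureReal_comp_apply hA]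
    calc _ ≤ 1 - max ρ 0 / 2 * (1 - 1 / 2) :=
          integral_sub_integral_le_of_forall_sub_le (Kernel.integrable_measureReal _ hA)
            (Kernel.integrable_measureReal _ hA)
            (fun x => ⟨measureReal_nonneg, measureReal_le_one⟩) hB (hosc A hA)
            (by positivity) (hreturn u) (hreturn u')
      _ ≤ 1 - ρ / 4 := by linarith [le_max_left ρ 0]
  exact fun v w => tvDist_le_of_forall_sub_le (hstep v w) (hstep w v)

/-- Doeblin-type three-step estimate: if `P(x,K) ≥ 1/2` for all `x`, `P(v,B) ≥ ρ` for all
`v ∈ K`, and `‖P(v,·) − P(w,·)‖_TV ≤ 1/2` for all `v, w ∈ B`, then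
`‖P³(v,·) − P³(w,·)‖_TV ≤ 1 − ρ/4` for all `v, w`. -/
theorem doeblin_three_step {X : Type*} [MeasurableSpace X]
    (P : Kernel X X) [IsMarkovKernel P]
    (K B : Set X) (hK : MeasurableSet K) (hB : MeasurableSet B) (ρ : ℝ)
    (h1 : ∀ x : X, (1 / 2 : ℝ≥0∞) ≤ P x K)
    (h2 : ∀ v ∈ K, ENNReal.ofReal ρ ≤ P v B)
    (h3 : ∀ v ∈ B, ∀ w ∈ B, tvDist (P v) (P w) ≤ 1 / 2) :
    ∀ v w : X, tvDist ((P ∘ₖ P ∘ₖ P) v) ((P ∘ₖ P ∘ₖ P) w) ≤ 1 - ρ / 4 :=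
  doeblin_three_step_general P K B hB ρ h1 h2 h3
end
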